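/- arXiv:1511.01137 — 2 statements merged into one kernel-verified Lean document; each statement's English description precedes it below -/
import Mathlib

section
/- Let T be a T_7-free tournament, let z be any vertex of T, and let ℓ ≥ 3. If V_ℓ(z) is 2-in-dominated by V_{ℓ−1}(z), then V_ℓ(z) induces a T_5-free subtournament. -/
/-- A tournament on vertex set `V`: an irreflexive relation such that for
all distinct `u, v` exactly one of `u→v` and `v→u` holds. -/
def IsTournament {V : Type*} (r : V → V → Prop) : Prop :=
  (∀ v, ¬ r v v) ∧ ∀ u v : V, u ≠ v → (r u v ↔ ¬ r v u)

/-- The restriction of `r` to the vertex set `X` is a transitive relation. -/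
def TransOn {V : Type*} (r : V → V → Prop) (X : Finset V) : Prop :=
  ∀ x ∈ X, ∀ y ∈ X, ∀ z ∈ X, r x y → r y z → r x z

/-- There is a directed walk of length `k` from `v` to `z`. -/
def ReachLen {V : Type*} (r : V → V → Prop) (v z : V) (k : ℕ) : Prop :=
  ∃ f : Fin (k + 1) → V, f 0 = v ∧ f (Fin.last k) = z ∧
    ∀ i : Fin k, r (f i.castSucc) (f i.succ)

/-- The layer `V_ℓ(z)`: vertices whose shortest directed path to `z` has length
exactly `ℓ - 1`. -/
def layer {V : Type*} (r : V → V → Prop) (z : V) (ℓ : ℕ) : Set V :=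
  {v | ReachLen r v z (ℓ - 1) ∧ ∀ m < ℓ - 1, ¬ ReachLen r v z m}

/-- `Z` 2-in-dominates `S`: some subset `Z' ⊆ Z` with `|Z'| ≤ 2` in-dominates `S`,
i.e. every `s ∈ S` has an arc `s → z'` to some `z' ∈ Z'`. -/
def TwoInDominates {V : Type*} (r : V → V → Prop) (Z S : Set V) : Prop :=
  ∃ Z' : Set V, Z' ⊆ Z ∧ Z'.ncard ≤ 2 ∧ ∀ s ∈ S, ∃ z' ∈ Z', r s z'

/-- The set `A` induces a `T_5`-free subtournament: every 5-element subset of `A`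
contains a 4-element transitive subset. -/
def T5FreeOn {V : Type*} (r : V → V → Prop) (A : Set V) : Prop :=
  ∀ X : Finset V, (↑X : Set V) ⊆ A → X.card = 5 →
    ∃ Y ⊆ X, Y.card = 4 ∧ TransOn r Y

/-- The tournament is `T_7`-free: every 7-element vertex subset contains a 5-element
transitive subset. -/
def T7Free {V : Type*} (r : V → V → Prop) : Prop :=
  ∀ Q : Finset V, Q.card = 7 → ∃ X ⊆ Q, X.card = 5 ∧ TransOn r X

/-! Pick `z'` in the 2-in-dominating pair that receives arcs from at least three vertices of the
5-set `X ⊆ V_ℓ(z)`, and an out-neighbour `w` of `z'` in `V_{ℓ-2}(z)`; no vertex of `V_ℓ(z)` has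
an arc to `w`. A transitive 5-subset of the 7-set `X ∪ {z', w}` cannot contain both `z'` and `w`:
it would then avoid the three in-neighbours of `z'` in `X`, since `x → z' → w` would force
`x → w`. So it meets `X` in at least four vertices, which span a transitive subtournament. -/

section Layers

variable {V : Type*} {r : V → V → Prop} {a v w z : V} {i j k : ℕ}

theorem reachLen_succ_iff :
    ReachLen r a z (k + 1) ↔ ∃ b, r a b ∧ ReachLen r b z k := by
  constructor
  · rintro ⟨f, hf0, hfl, hf⟩
    refine ⟨f 1, hf0 ▸ hf 0, Fin.tail f, rfl, hfl, fun i => ?_⟩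
    simpa [Fin.tail, ← Fin.succ_castSucc] using hf i.succ
  · rintro ⟨b, hab, f, hf0, hfl, hf⟩
    refine ⟨Fin.cons a f, rfl, hfl, fun i => ?_⟩
    cases i using Fin.cases with
    | zero => simpa [hf0] using hab
    | succ i => simpa [← Fin.succ_castSucc] using hf i

theorem eq_of_mem_layer_succ (hi : v ∈ layer r z (i + 1)) (hj : v ∈ layer r z (j + 1)) :
    i = j := by
  rcases lt_trichotomy i j with h | h | h
  · exact absurd hi.1 (hj.2 i h)
  · exact h
  · exact absurd hj.1 (hi.2 j h)

theorem le_succ_of_rel_of_mem_layer (hv : v ∈ layer r z (i + 1)) (hw : w ∈ layer r z (j + 1))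
    (hvw : r v w) : i ≤ j + 1 :=
  not_lt.1 fun h => hv.2 (j + 1) h (reachLen_succ_iff.2 ⟨w, hvw, hw.1⟩)

theorem exists_rel_mem_layer_of_mem_layer (hv : v ∈ layer r z (i + 2)) :
    ∃ w ∈ layer r z (i + 1), r v w := by
  obtain ⟨w, hvw, hw⟩ := reachLen_succ_iff.1 hv.1
  exact ⟨w, ⟨hw, fun m hm hwm => hv.2 (m + 1) (by omega) (reachLen_succ_iff.2 ⟨w, hvw, hwm⟩)⟩,
    hvw⟩

end Layers

theorem TransOn.mono {V : Type*} {r : V → V → Prop} {X Y : Finset V} (hY : TransOn r Y)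
    (hXY : X ⊆ Y) : TransOn r X :=
  fun x hx y hy w hw => hY x (hXY hx) y (hXY hy) w (hXY hw)

theorem TwoInDominates.exists_lt_card_rel {V : Type*} [Finite V] {r : V → V → Prop}
    {Z S : Set V} (hdom : TwoInDominates r Z S) {X : Finset V} (hXS : ↑X ⊆ S) {k : ℕ}
    (hX : 2 * k < X.card) : ∃ a ∈ Z, ∃ X₁ ⊆ X, k < X₁.card ∧ ∀ x ∈ X₁, r x a := by
  classical
  obtain ⟨Z', hZ'Z, hZ'card, hcov⟩ := hdom
  set T := (Set.toFinite Z').toFinset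
  have hT : T.card ≤ 2 := by rwa [← Set.ncard_eq_toFinset_card]
  have hsum : ∑ _a ∈ T, k < ∑ a ∈ T, (X.filter (r · a)).card :=
    calc ∑ _a ∈ T, k = T.card * k := by rw [Finset.sum_const, smul_eq_mul]
      _ ≤ 2 * k := Nat.mul_le_mul_right k hT
      _ < X.card := hX
      _ ≤ (T.biUnion fun a => X.filter (r · a)).card := Finset.card_le_card fun x hx => by
          obtain ⟨a, ha, hxa⟩ := hcov x (hXS hx)
          exact Finset.mem_biUnion.2 ⟨a, by simpa [T] using ha, Finset.mem_filter.2 ⟨hx, hxa⟩⟩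
      _ ≤ ∑ a ∈ T, (X.filter (r · a)).card := Finset.card_biUnion_le
  obtain ⟨a, ha, hlt⟩ := Finset.exists_lt_of_sum_lt hsum
  exact ⟨a, hZ'Z (by simpa [T] using ha), _, Finset.filter_subset _ _, hlt,
    fun x hx => (Finset.mem_filter.1 hx).2⟩

theorem T7Free.exists_transOn_card_four {V : Type*} {r : V → V → Prop} (h7 : T7Free r)
    {X X₁ : Finset V} (hX : X.card = 5) (hX₁X : X₁ ⊆ X) (hX₁ : 2 < X₁.card) {a b : V}
    (ha : a ∉ X) (hb : b ∉ X) (hab : a ≠ b) (hX₁a : ∀ x ∈ X₁, r x a) (hrab : r a b)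
    (hXb : ∀ x ∈ X, ¬ r x b) : ∃ Y ⊆ X, Y.card = 4 ∧ TransOn r Y := by
  classical
  obtain ⟨Y, hYQ, hY, hYt⟩ := h7 (insert a (insert b X)) (by
    rw [Finset.card_insert_of_notMem (by simp [hab, ha]), Finset.card_insert_of_notMem hb, hX])
  have hsplit := Finset.card_inter_add_card_sdiff Y X
  have hYX : Y \ X ⊆ {a, b} := fun y hy => by
    have := hYQ (Finset.mem_sdiff.1 hy).1
    simp_all
  have hne : Y \ X ≠ {a, b} := by
    intro hYab
    have haY : a ∈ Y := (Finset.mem_sdiff.1 (hYab ▸ Finset.mem_insert_self a {b})).1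
    have hbY : b ∈ Y := (Finset.mem_sdiff.1 (hYab ▸ by simp : b ∈ Y \ X)).1
    have hmiss : Y ∩ X ⊆ X \ X₁ := fun x hx => by
      obtain ⟨hxY, hxX⟩ := Finset.mem_inter.1 hx
      exact Finset.mem_sdiff.2
        ⟨hxX, fun hx₁ => hXb x hxX (hYt x hxY a haY b hbY (hX₁a x hx₁) hrab)⟩
    have hmiss_card := Finset.card_le_card hmiss
    rw [Finset.card_sdiff_of_subset hX₁X] at hmiss_card
    rw [hYab, Finset.card_pair hab] at hsplit
    omega
  have hlt : (Y \ X).card < 2 :=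
    Finset.card_pair hab ▸ Finset.card_lt_card (Finset.ssubset_iff_subset_ne.2 ⟨hYX, hne⟩)
  obtain ⟨Y', hY'Y, hY'⟩ := Finset.exists_subset_card_eq (s := Y ∩ X) (n := 4) (by omega)
  exact ⟨Y', hY'Y.trans Finset.inter_subset_right, hY',
    hYt.mono (hY'Y.trans Finset.inter_subset_left)⟩

theorem stmt13_general {V : Type*} [Fintype V]
    (r : V → V → Prop) (h7 : T7Free r) (z : V)
    (ℓ : ℕ) (hℓ : 3 ≤ ℓ)
    (hdom : TwoInDominates r (layer r z (ℓ - 1)) (layer r z ℓ)) :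
    T5FreeOn r (layer r z ℓ) := by
  obtain ⟨n, rfl⟩ : ∃ n, ℓ = n + 3 := ⟨ℓ - 3, by omega⟩
  intro X hX hX5
  obtain ⟨a, ha, X₁, hX₁X, hX₁, hX₁a⟩ := hdom.exists_lt_card_rel hX (k := 2) (by omega)
  replace ha : a ∈ layer r z (n + 2) := ha
  obtain ⟨b, hb, hab⟩ := exists_rel_mem_layer_of_mem_layer ha
  refine h7.exists_transOn_card_four hX5 hX₁X hX₁ ?_ ?_ ?_ hX₁a hab ?_
  · exact fun h => absurd (eq_of_mem_layer_succ (hX h) ha) (by omega)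
  · exact fun h => absurd (eq_of_mem_layer_succ (hX h) hb) (by omega)
  · rintro rfl
    exact absurd (eq_of_mem_layer_succ ha hb) (by omega)
  · exact fun x hx hxb => absurd (le_succ_of_rel_of_mem_layer (hX hx) hb hxb) (by omega)

/-- in a `T_7`-free tournament, for any vertex `z` and any `ℓ ≥ 3`, if
`V_ℓ(z)` is 2-in-dominated by `V_{ℓ-1}(z)`, then `V_ℓ(z)` induces a `T_5`-free
subtournament. -/
theorem stmt13 {V : Type*} [Fintype V] [DecidableEq V]
    (r : V → V → Prop) (hT : IsTournament r) (h7 : T7Free r) (z : V)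
    (ℓ : ℕ) (hℓ : 3 ≤ ℓ)
    (hdom : TwoInDominates r (layer r z (ℓ - 1)) (layer r z ℓ)) :
    T5FreeOn r (layer r z ℓ) :=
  stmt13_general r h7 z ℓ hℓ hdom
end

section
/- Let T be a T_7-free tournament and let z be any vertex of T. Then V_3(z) is 2-in-dominated by V_2(z): there exist at most two vertices a, b ∈ V_2(z) such that every v ∈ V_3(z) satisfies v→a or v→b. -/
/-!
If no two vertices of `V_2(z)` in-dominate `V_3(z)`, an extremal choice produces
`v₁, v₂, v₃ ∈ V_3(z)` and `a₁, a₂, a₃ ∈ V_2(z)` with `vᵢ → aⱼ` exactly when `i = j`: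
take `v₁` with the fewest out-neighbours in `V_2(z)` and one of them `a₁`; among the vertices
not sending an arc to `a₁`, take `v₂` with the fewest out-neighbours outside those of `v₁`,
and by minimality of `v₁` one of these, `a₂`, exists; any `v₃` sending no arc to `a₁` or
`a₂` then has an out-neighbour `a₃` outside those of `v₁` and `v₂`, by minimality of `v₂`.
These six vertices and `z` (with `z → vᵢ → aᵢ → z`) contain no transitive 5-set: deleting
two vertices other than `z` leaves a triangle `z, vᵢ, aᵢ`, and deleting `z` and one more
vertex leaves a 4-cycle `vᵢ → aᵢ → vⱼ → aⱼ → vᵢ`.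
-/

open Finset Function

section Reach

variable {V : Type*} {r : V → V → Prop} {v z : V}

theorem reachLen_zero_iff : ReachLen r v z 0 ↔ v = z :=
  ⟨fun ⟨_, h0, hz, _⟩ => h0.symm.trans hz, fun h => ⟨fun _ => v, rfl, h, fun i => i.elim0⟩⟩

theorem reachLen_one_iff : ReachLen r v z 1 ↔ r v z := by
  constructor
  · rintro ⟨f, rfl, rfl, hf⟩
    exact hf 0
  · intro h
    refine ⟨![v, z], rfl, rfl, fun i => ?_⟩
    fin_cases i
    exact h

theorem reachLen_two_iff : ReachLen r v z 2 ↔ ∃ w, r v w ∧ r w z := by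
  constructor
  · rintro ⟨f, rfl, rfl, hf⟩
    exact ⟨f 1, hf 0, hf 1⟩
  · rintro ⟨w, hvw, hwz⟩
    refine ⟨![v, w, z], rfl, rfl, fun i => ?_⟩
    fin_cases i
    exacts [hvw, hwz]

theorem mem_layer_two_iff : v ∈ layer r z 2 ↔ r v z ∧ v ≠ z := by
  change ReachLen r v z 1 ∧ (∀ m < 1, ¬ ReachLen r v z m) ↔ _
  simp [reachLen_one_iff, reachLen_zero_iff]

theorem mem_layer_three_iff :
    v ∈ layer r z 3 ↔ (∃ w, r v w ∧ r w z) ∧ ¬ r v z ∧ v ≠ z := by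
  change ReachLen r v z 2 ∧ (∀ m < 2, ¬ ReachLen r v z m) ↔ _
  rw [reachLen_two_iff]
  refine and_congr_right fun _ => ⟨fun h => ⟨mt reachLen_one_iff.2 (h 1 one_lt_two),
    mt reachLen_zero_iff.2 (h 0 two_pos)⟩, ?_⟩
  rintro ⟨h1, h0⟩ m hm
  interval_cases m
  exacts [mt reachLen_zero_iff.1 h0, mt reachLen_one_iff.1 h1]

end Reach

namespace IsTournament

variable {V : Type*} {r : V → V → Prop} {u v w x z : V}

theorem ne_of_rel (hT : IsTournament r) (h : r u v) : u ≠ v := by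
  rintro rfl
  exact hT.1 u h

theorem asymm (hT : IsTournament r) (h : r u v) : ¬ r v u :=
  (hT.2 u v (hT.ne_of_rel h)).1 h

theorem rel_of_not_rel (hT : IsTournament r) (hne : u ≠ v) (h : ¬ r u v) : r v u :=
  (hT.2 v u hne.symm).2 h

theorem rel_of_mem_layer_three (hT : IsTournament r) (hv : v ∈ layer r z 3) : r z v :=
  have ⟨_, hvz, hne⟩ := mem_layer_three_iff.1 hv
  hT.rel_of_not_rel hne hvz

theorem not_rel_of_transOn (hT : IsTournament r) {X : Finset V} (hX : TransOn r X)
    (hu : u ∈ X) (hv : v ∈ X) (hw : w ∈ X) (huv : r u v) (hvw : r v w) : ¬ r w u :=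
  hT.asymm (hX u hu v hv w hw huv hvw)

theorem not_rel_of_transOn₄ (hT : IsTournament r) {X : Finset V} (hX : TransOn r X)
    (hu : u ∈ X) (hv : v ∈ X) (hw : w ∈ X) (hx : x ∈ X) (huv : r u v) (hvw : r v w)
    (hwx : r w x) : ¬ r x u :=
  hT.not_rel_of_transOn hX hu hw hx (hX u hu v hv w hw huv hvw) hwx

end IsTournament

theorem Finset.card_le_card_filter_subset_add_card_sdiff {ι α : Type*} [Fintype ι]
    [DecidableEq α] {P : ι → Finset α} (hP : Pairwise (Disjoint on P)) (X : Finset α) :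
    Fintype.card ι ≤ #{i | P i ⊆ X} + #(univ.biUnion P \ X) := by
  have hnot : #{i | ¬ P i ⊆ X} ≤ #(univ.biUnion P \ X) := by
    refine (card_le_card_biUnion (f := fun i => P i \ X)
      (fun i _ j _ hij => (hP hij).mono sdiff_le sdiff_le)
      fun i hi => sdiff_nonempty.2 (mem_filter.1 hi).2).trans (card_le_card ?_)
    exact biUnion_subset.2 fun i _ =>
      sdiff_subset_sdiff (subset_biUnion_of_mem P (mem_univ i)) le_rfl
  have := card_filter_add_card_filter_not (s := univ) fun i => P i ⊆ X
  rw [card_univ] at this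
  omega

theorem exists_diagonal_of_not_cover_two {α β : Type*} {E : β → α → Prop} {A : Finset α}
    {B : Finset β} (hN : ∀ v ∈ B, ∃ a ∈ A, E v a)
    (hcover : ∀ S ⊆ A, #S ≤ 2 → ∃ v ∈ B, ∀ a ∈ S, ¬ E v a) :
    ∃ v : Fin 3 → β, ∃ a : Fin 3 → α,
      (∀ i, v i ∈ B) ∧ (∀ i, a i ∈ A) ∧ ∀ i j, E (v i) (a j) ↔ i = j := by
  classical
  let N : β → Finset α := fun v => {a ∈ A | E v a}
  have mem_N {v a} : a ∈ N v ↔ a ∈ A ∧ E v a := mem_filter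
  obtain ⟨v₀, hv₀, -⟩ := hcover ∅ (empty_subset A) (by simp)
  obtain ⟨v₁, hv₁, hv₁min⟩ := exists_min_image B (fun v => #(N v)) ⟨v₀, hv₀⟩
  obtain ⟨a₁, ha₁, hv₁a₁⟩ := hN v₁ hv₁
  obtain ⟨v₂, hv₂, hv₂min⟩ := exists_min_image {v ∈ B | ¬ E v a₁} (fun v => #(N v \ N v₁))
    (by simpa [filter_nonempty_iff] using hcover {a₁} (by simpa) (by simp))
  rw [mem_filter] at hv₂
  obtain ⟨a₂, ha₂⟩ : (N v₂ \ N v₁).Nonempty := by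
    refine sdiff_nonempty.2 fun hsub => ?_
    have : N v₂ ⊂ N v₁ := (ssubset_iff_of_subset hsub).2 ⟨a₁, mem_N.2 ⟨ha₁, hv₁a₁⟩,
      fun h => hv₂.2 (mem_N.1 h).2⟩
    exact (card_lt_card this).not_ge (hv₁min v₂ hv₂.1)
  rw [mem_sdiff, mem_N, mem_N] at ha₂
  obtain ⟨v₃, hv₃, hv₃a⟩ := hcover {a₁, a₂} (insert_subset ha₁ (by simpa using ha₂.1.1))
    card_le_two
  simp only [mem_insert, mem_singleton, forall_eq_or_imp, forall_eq] at hv₃a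
  obtain ⟨a₃, ha₃, ha₃₁, ha₃₂⟩ : ∃ a ∈ N v₃, a ∉ N v₁ ∧ a ∉ N v₂ := by
    by_contra! h
    have : N v₃ \ N v₁ ⊂ N v₂ \ N v₁ := by
      refine (ssubset_iff_of_subset fun a ha => ?_).2 ⟨a₂, ?_, ?_⟩
      · rw [mem_sdiff] at ha ⊢
        exact ⟨h a ha.1 ha.2, ha.2⟩
      · exact mem_sdiff.2 ⟨mem_N.2 ha₂.1, mt mem_N.1 ha₂.2⟩
      · exact fun h => hv₃a.2 (mem_N.1 (mem_sdiff.1 h).1).2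
    exact (card_lt_card this).not_ge (hv₂min v₃ (mem_filter.2 ⟨hv₃, hv₃a.1⟩))
  rw [mem_N] at ha₃ ha₃₁ ha₃₂
  refine ⟨![v₁, v₂, v₃], ![a₁, a₂, a₃], ?_, ?_, ?_⟩
  · intro i; fin_cases i
    exacts [hv₁, hv₂.1, hv₃]
  · intro i; fin_cases i
    exacts [ha₁, ha₂.1.1, ha₃.1]
  · intro i j
    fin_cases i <;> fin_cases j <;> simp_all

theorem IsTournament.pairwise_disjoint_of_diagonal {V : Type*} [DecidableEq V]
    {r : V → V → Prop} (hT : IsTournament r) {z : V} {v a : Fin 3 → V}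
    (hzv : ∀ i, r z (v i)) (haz : ∀ i, r (a i) z) (hva : ∀ i j, r (v i) (a j) ↔ i = j) :
    Pairwise (Disjoint on fun i => ({v i, a i} : Finset V)) := by
  intro i j hij
  have hv : v j ≠ v i := fun h => hij ((hva j i).1 (h ▸ (hva i i).2 rfl)).symm
  have ha : a j ≠ a i := fun h => hij ((hva i j).1 (h ▸ (hva i i).2 rfl))
  have hv_ne_a k l : v k ≠ a l := fun h => hT.asymm (haz l) (h ▸ hzv k)
  simp [hv, ha, hv_ne_a, (hv_ne_a _ _).symm]

theorem IsTournament.not_t7Free_of_diagonal {V : Type*} {r : V → V → Prop}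
    (hT : IsTournament r) {z : V} {v a : Fin 3 → V} (hzv : ∀ i, r z (v i))
    (haz : ∀ i, r (a i) z) (hva : ∀ i j, r (v i) (a j) ↔ i = j) : ¬ T7Free r := by
  classical
  intro h7
  have hv_ne_a i j : v i ≠ a j := fun h => hT.asymm (haz j) (h ▸ hzv i)
  have hav {i j} (hij : i ≠ j) : r (a i) (v j) :=
    hT.rel_of_not_rel (hv_ne_a j i) fun h => hij ((hva j i).1 h).symm
  let P : Fin 3 → Finset V := fun i => {v i, a i}
  have hP : Pairwise (Disjoint on P) := hT.pairwise_disjoint_of_diagonal hzv haz hva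
  have hz : z ∉ univ.biUnion P := by
    simp [P, fun i => (hT.ne_of_rel (hzv i)), fun i => (hT.ne_of_rel (haz i)).symm]
  have hQ : #(insert z (univ.biUnion P)) = 7 := by
    rw [card_insert_of_notMem hz, card_biUnion fun i _ j _ hij => hP hij]
    simp [P, hv_ne_a]
  obtain ⟨X, hXQ, hX5, hX⟩ := h7 _ hQ
  have hcount := card_le_card_filter_subset_add_card_sdiff hP X
  rw [Fintype.card_fin] at hcount
  have hQX : #(insert z (univ.biUnion P) \ X) = 2 := by
    rw [card_sdiff_of_subset hXQ, hQ, hX5]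
  have hvX {i} (hi : P i ⊆ X) : v i ∈ X := hi (by simp [P])
  have haX {i} (hi : P i ⊆ X) : a i ∈ X := hi (by simp [P])
  by_cases hzX : z ∈ X
  · have : #(univ.biUnion P \ X) ≤ 2 :=
      hQX ▸ card_le_card (sdiff_subset_sdiff (subset_insert _ _) le_rfl)
    obtain ⟨i, hi⟩ := card_pos.1 (show 0 < #{i | P i ⊆ X} by omega)
    rw [mem_filter] at hi
    exact hT.not_rel_of_transOn hX hzX (hvX hi.2) (haX hi.2) (hzv i) ((hva i i).2 rfl) (haz i)
  · have : #(univ.biUnion P \ X) ≤ 1 := by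
      have hsub : univ.biUnion P \ X ⊆ (insert z (univ.biUnion P) \ X).erase z :=
        fun x hx => mem_erase.2 ⟨fun h => hz (h ▸ (mem_sdiff.1 hx).1),
          sdiff_subset_sdiff (subset_insert _ _) le_rfl hx⟩
      have := card_le_card hsub
      rw [card_erase_of_mem (mem_sdiff.2 ⟨mem_insert_self _ _, hzX⟩), hQX] at this
      exact this
    obtain ⟨i, hi, j, hj, hij⟩ := one_lt_card.1 (show 1 < #{i | P i ⊆ X} by omega)
    rw [mem_filter] at hi hj
    exact hT.not_rel_of_transOn₄ hX (hvX hi.2) (haX hi.2) (hvX hj.2) (haX hj.2)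
      ((hva i i).2 rfl) (hav hij) ((hva j j).2 rfl) (hav hij.symm)

theorem stmt14_general {V : Type*} [Fintype V]
    (r : V → V → Prop) (hT : IsTournament r) (h7 : T7Free r) (z : V) :
    TwoInDominates r (layer r z 2) (layer r z 3) := by
  by_contra hdom
  set A := (layer r z 2).toFinite.toFinset
  set B := (layer r z 3).toFinite.toFinset
  have hN : ∀ v ∈ B, ∃ a ∈ A, r v a := fun v hv => by
    obtain ⟨⟨w, hvw, hwz⟩, hvz, -⟩ := mem_layer_three_iff.1 ((Set.Finite.mem_toFinset _).1 hv)
    exact ⟨w, (Set.Finite.mem_toFinset _).2 (mem_layer_two_iff.2 ⟨hwz, fun h => hvz (h ▸ hvw)⟩),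
      hvw⟩
  have hcover : ∀ S ⊆ A, #S ≤ 2 → ∃ v ∈ B, ∀ a ∈ S, ¬ r v a := fun S hS hS2 => by
    by_contra! h
    exact hdom ⟨S, fun a ha => (Set.Finite.mem_toFinset _).1 (hS ha),
      by rwa [Set.ncard_coe_finset], fun s hs => h s ((Set.Finite.mem_toFinset _).2 hs)⟩
  obtain ⟨v, a, hvB, haA, hva⟩ := exists_diagonal_of_not_cover_two hN hcover
  simp only [A, B, Set.Finite.mem_toFinset] at hvB haA
  exact hT.not_t7Free_of_diagonal (fun i => hT.rel_of_mem_layer_three (hvB i))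
    (fun i => (mem_layer_two_iff.1 (haA i)).1) hva h7

/-- in a `T_7`-free tournament, for every vertex `z`, the set `V_3(z)`
is 2-in-dominated by `V_2(z)`. -/
theorem stmt14 {V : Type*} [Fintype V] [DecidableEq V]
    (r : V → V → Prop) (hT : IsTournament r) (h7 : T7Free r) (z : V) :
    TwoInDominates r (layer r z 2) (layer r z 3) :=
  stmt14_general r hT h7 z
end
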